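/- If X₁ is a nonnegative random variable bounded above by a positive real U, X₂ is a real random variable symmetric about 0 (i.e., X₂ and -X₂ have the same distribution), and Y = X₁ + X₂ is almost surely nonnegative, then Y ≤ 2U almost surely. -/

import Mathlib

open MeasureTheory

theorem bounded_plus_symmetric_nonneg_bounded
    {Ω : Type*} [MeasurableSpace Ω] (μ : Measure Ω) [IsProbabilityMeasure μ]
    (X₁ X₂ : Ω → ℝ) (hX₁ : Measurable X₁) (hX₂ : Measurable X₂)
    (U : ℝ) (hU : 0 < U)
    (h₁ : ∀ᵐ ω ∂μ, 0 ≤ X₁ ω ∧ X₁ ω ≤ U)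
    (hsym : Measure.map X₂ μ = Measure.map (fun ω => -X₂ ω) μ)
    (hY : μ {ω | X₁ ω + X₂ ω < 0} = 0) :
    μ {ω | X₁ ω + X₂ ω > 2 * U} = 0 := by
  have hY' : ∀ᵐ ω ∂μ, 0 ≤ X₁ ω + X₂ ω := by
    rw [ae_iff]
    simpa [not_le] using hY
  -- μ {X₂ > U} = μ {X₂ < -U}
  have hmap : μ {ω | U < X₂ ω} = μ {ω | X₂ ω < -U} := by
    have h1 : μ {ω | U < X₂ ω} = Measure.map X₂ μ (Set.Ioi U) := by
      rw [Measure.map_apply hX₂ measurableSet_Ioi]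
      rfl
    have h2 : Measure.map (fun ω => -X₂ ω) μ (Set.Ioi U) = μ {ω | X₂ ω < -U} := by
      rw [Measure.map_apply (show Measurable (fun ω => -X₂ ω) from hX₂.neg) measurableSet_Ioi]
      congr 1
      ext ω
      simp [Set.mem_Ioi, lt_neg]
    rw [h1, hsym, h2]
  have hlow : μ {ω | X₂ ω < -U} = 0 := by
    have : ∀ᵐ ω ∂μ, ¬ (X₂ ω < -U) := by
      filter_upwards [h₁, hY'] with ω hω hsum
      intro h
      have : X₁ ω + X₂ ω < 0 := by linarith [hω.2]
      linarith
    rw [ae_iff] at this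
    simpa using this
  have hhigh : ∀ᵐ ω ∂μ, ¬ (U < X₂ ω) := by
    rw [ae_iff]
    simpa using hmap.trans hlow
  have : ∀ᵐ ω ∂μ, ¬ (X₁ ω + X₂ ω > 2 * U) := by
    filter_upwards [h₁, hhigh] with ω hω h2
    intro h
    exact h2 (by linarith [hω.2])
  rw [ae_iff] at this
  simpa using this
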